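/- Let k ≥ 1 be an integer and τ a level-k test section. Then every Weil–Brezin coefficient τ̃_m is a Schwartz function on ℝ^n: for every m ∈ ℤ^n, every multi-index α and every s ∈ ℕ, the supremum over x ∈ ℝ^n of (1 + ‖x‖)^s · |∂^α τ̃_m(x)| is finite. (This is the claim, used in Section 6 of the paper, that the Weil–Brezin transformation takes values in products of Schwartz spaces.) -/

import Mathlib

set_option synthInstance.maxHeartbeats 100000
set_option maxHeartbeats 1000000
set_option linter.deprecated false


noncomputable section

open MeasureTheory

/-- `ℝ^{2n}` written as pairs `(x, y)` with `x, y ∈ ℝ^n`. -/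
abbrev En (n : ℕ) : Type := (Fin n → ℝ) × (Fin n → ℝ)

/-- The unit cube `[0,1]^n ⊆ ℝ^n`. -/
def unitBox (n : ℕ) : Set (Fin n → ℝ) := Set.univ.pi fun _ => Set.Icc (0 : ℝ) 1

/-- A level-`k` test section: a smooth function on `ℝ^{2n}` with the quasi-periodicity
`τ(x+μ, y+ν) = e^{-2π√-1 k ⟨μ,y⟩} τ(x,y)` for all `μ, ν ∈ ℤ^n`. -/
def IsTestSection (n k : ℕ) (τ : En n → ℂ) : Prop :=
  ContDiff ℝ (⊤ : ℕ∞) τ ∧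
  ∀ (μ ν : Fin n → ℤ) (x y : Fin n → ℝ),
    τ (x + (fun i => (μ i : ℝ)), y + (fun i => (ν i : ℝ))) =
      Complex.exp (-(2 * (Real.pi : ℂ) * Complex.I * (k : ℂ) *
        ((∑ i, (μ i : ℝ) * y i : ℝ) : ℂ))) * τ (x, y)

/-- The `m`-th Weil–Brezin coefficient
`τ̃_m(x) = ∫_{[0,1]^n} e^{2π√-1⟨m,y⟩} τ(x,y) dy`. -/
def WB (n : ℕ) (τ : En n → ℂ) (m : Fin n → ℤ) (x : Fin n → ℝ) : ℂ :=
  ∫ y in unitBox n, Complex.exp (2 * (Real.pi : ℂ) * Complex.I *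
    ((∑ i, (m i : ℝ) * y i : ℝ) : ℂ)) * τ (x, y)

/-- Partial derivative `∂_i` of a function on `ℝ^n`. -/
def pd1 (n : ℕ) (i : Fin n) : ((Fin n → ℝ) → ℂ) → (Fin n → ℝ) → ℂ :=
  fun g x => fderiv ℝ g x (Pi.single i 1)

/-- Iterated partial derivative `∂^α` for a multi-index `α : Fin n → ℕ`. -/
def pdMulti (n : ℕ) (α : Fin n → ℕ) (g : (Fin n → ℝ) → ℂ) : (Fin n → ℝ) → ℂ :=
  (List.ofFn fun i => (pd1 n i)^[α i]).foldr (fun F ψ => F ψ) g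

/-! ### Auxiliary development -/

/-- The exponential factor in the integrand of `WB`. -/
def ee (n : ℕ) (m : Fin n → ℤ) (y : Fin n → ℝ) : ℂ :=
  Complex.exp (2 * (Real.pi : ℂ) * Complex.I * ((∑ i, (m i : ℝ) * y i : ℝ) : ℂ))

lemma WB_eq (n : ℕ) (τ : En n → ℂ) (m : Fin n → ℤ) (x : Fin n → ℝ) :
    WB n τ m x = ∫ y in unitBox n, ee n m y * τ (x, y) := rfl

lemma unitBox_eq (n : ℕ) : unitBox n = Set.Icc (0 : Fin n → ℝ) 1 := by
  rw [← Set.pi_univ_Icc]; rfl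

lemma norm_ee (n : ℕ) (m : Fin n → ℤ) (y : Fin n → ℝ) : ‖ee n m y‖ = 1 := by
  have : (2 * (Real.pi : ℂ) * Complex.I * ((∑ i, (m i : ℝ) * y i : ℝ) : ℂ))
      = ((2 * Real.pi * (∑ i, (m i : ℝ) * y i) : ℝ) : ℂ) * Complex.I := by
    push_cast; ring
  rw [ee, this, Complex.norm_exp_ofReal_mul_I]

/-- Directional derivative. -/
def Dv (n : ℕ) (v : En n) (σ : En n → ℂ) : En n → ℂ := fun p => fderiv ℝ σ p v

lemma contDiff_Dv (n : ℕ) (v : En n) {σ : En n → ℂ} (hσ : ContDiff ℝ (⊤ : ℕ∞) σ) :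
    ContDiff ℝ (⊤ : ℕ∞) (Dv n v σ) := by
  exact (hσ.fderiv_right (by simp)).clm_apply contDiff_const

lemma hasDerivAt_slice (n : ℕ) (v : En n) {σ : En n → ℂ} (hσ : ContDiff ℝ (⊤ : ℕ∞) σ)
    (p : En n) :
    HasDerivAt (fun t : ℝ => σ (p + t • v)) (Dv n v σ p) 0 := by
  have h1 : HasFDerivAt σ (fderiv ℝ σ p) p :=
    (hσ.differentiable (by simp)).differentiableAt.hasFDerivAt
  have h2 : HasDerivAt (fun t : ℝ => p + t • v) v 0 := by
    simpa using ((hasDerivAt_id (0:ℝ)).smul_const v).const_add p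
  have h1' : HasFDerivAt σ (fderiv ℝ σ p) (p + (0:ℝ) • v) := by simpa using h1
  exact (by simpa using h1'.comp_hasDerivAt (0:ℝ) h2 :
    HasDerivAt (σ ∘ fun t : ℝ => p + t • v) (fderiv ℝ σ p v) 0)

lemma Dx_isTestSection (n k : ℕ) (i : Fin n) {σ : En n → ℂ} (hσ : IsTestSection n k σ) :
    IsTestSection n k (Dv n (Pi.single i 1, 0) σ) := by
  obtain ⟨hsm, hper⟩ := hσ
  refine ⟨contDiff_Dv _ _ hsm, ?_⟩
  intro μ ν x y
  set c := Complex.exp (-(2 * (Real.pi : ℂ) * Complex.I * (k : ℂ) *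
    ((∑ i, (μ i : ℝ) * y i : ℝ) : ℂ))) with hc
  have h1 := hasDerivAt_slice n (Pi.single i 1, 0) hsm
    (x + (fun i => (μ i : ℝ)), y + fun i => (ν i : ℝ))
  have h2 := (hasDerivAt_slice n (Pi.single i 1, 0) hsm (x, y)).const_mul c
  have heq : (fun t : ℝ => σ ((x + (fun i => (μ i : ℝ)), y + fun i => (ν i : ℝ))
        + t • ((Pi.single i 1 : Fin n → ℝ), (0 : Fin n → ℝ))))
      = fun t : ℝ => c * σ ((x, y) + t • ((Pi.single i 1 : Fin n → ℝ), (0 : Fin n → ℝ))) := by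
    funext t
    have := hper μ ν (x + t • (Pi.single i 1 : Fin n → ℝ)) y
    simp only [Prod.smul_mk, Prod.mk_add_mk, smul_zero, add_zero] at this ⊢
    rw [show x + (fun i => (μ i : ℝ)) + t • (Pi.single i 1 : Fin n → ℝ)
        = x + t • (Pi.single i 1 : Fin n → ℝ) + (fun i => (μ i : ℝ)) by
      rw [add_right_comm]]
    rw [this, hc]
  rw [heq] at h1
  exact h1.unique h2

/-- Periodicity in the `y` variables, together with smoothness. -/
def PerY (n : ℕ) (σ : En n → ℂ) : Prop :=
  ContDiff ℝ (⊤ : ℕ∞) σ ∧ ∀ (ν : Fin n → ℤ) (x y : Fin n → ℝ),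
    σ (x, y + fun i => (ν i : ℝ)) = σ (x, y)

lemma IsTestSection.perY {n k : ℕ} {σ : En n → ℂ} (hσ : IsTestSection n k σ) : PerY n σ := by
  refine ⟨hσ.1, fun ν x y => ?_⟩
  have h := hσ.2 0 ν x y
  rw [show x + (fun i => (((0 : Fin n → ℤ)) i : ℝ)) = x by funext i; simp] at h
  simpa using h

lemma Dy_perY (n : ℕ) (j : Fin n) {σ : En n → ℂ} (hσ : PerY n σ) :
    PerY n (Dv n (0, Pi.single j 1) σ) := by
  obtain ⟨hsm, hper⟩ := hσ
  refine ⟨contDiff_Dv _ _ hsm, ?_⟩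
  intro ν x y
  have h1 := hasDerivAt_slice n ((0 : Fin n → ℝ), Pi.single j 1) hsm
    (x, y + fun i => (ν i : ℝ))
  have h2 := hasDerivAt_slice n ((0 : Fin n → ℝ), Pi.single j 1) hsm (x, y)
  have heq : (fun t : ℝ => σ ((x, y + fun i => (ν i : ℝ))
        + t • ((0 : Fin n → ℝ), (Pi.single j 1 : Fin n → ℝ))))
      = fun t : ℝ => σ ((x, y) + t • ((0 : Fin n → ℝ), (Pi.single j 1 : Fin n → ℝ))) := by
    funext t
    have := hper ν x (y + t • (Pi.single j 1 : Fin n → ℝ))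
    simp only [Prod.smul_mk, Prod.mk_add_mk, smul_zero, add_zero] at this ⊢
    rw [show y + (fun i => (ν i : ℝ)) + t • (Pi.single j 1 : Fin n → ℝ)
        = y + t • (Pi.single j 1 : Fin n → ℝ) + (fun i => (ν i : ℝ)) by
      rw [add_right_comm]]
    rw [this]
  rw [heq] at h1
  exact h1.unique h2

lemma ee_mul_shift (n k : ℕ) (m μ : Fin n → ℤ) (y : Fin n → ℝ) :
    ee n m y * Complex.exp (-(2 * (Real.pi : ℂ) * Complex.I * (k : ℂ) *
        ((∑ i, (μ i : ℝ) * y i : ℝ) : ℂ)))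
      = ee n (fun i => m i - (k : ℤ) * μ i) y := by
  rw [ee, ee, ← Complex.exp_add]
  congr 1
  push_cast [sub_mul, Finset.sum_sub_distrib]
  simp only [mul_assoc, ← Finset.mul_sum]
  ring

lemma WB_translate {n k : ℕ} {σ : En n → ℂ} (hσ : IsTestSection n k σ)
    (m μ : Fin n → ℤ) (x : Fin n → ℝ) :
    WB n σ m (x + fun i => (μ i : ℝ)) = WB n σ (fun i => m i - (k : ℤ) * μ i) x := by
  rw [WB_eq, WB_eq]
  have key : ∀ y : Fin n → ℝ, ee n m y * σ (x + (fun i => (μ i : ℝ)), y)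
      = ee n (fun i => m i - (k : ℤ) * μ i) y * σ (x, y) := by
    intro y
    have h := hσ.2 μ 0 x y
    rw [show y + (fun i => (((0 : Fin n → ℤ)) i : ℝ)) = y by funext i; simp] at h
    rw [h, ← mul_assoc, mul_comm (ee n m y) _, mul_comm _ (ee n m y), ee_mul_shift n k m μ y]
  rw [show (fun y => ee n m y * σ (x + (fun i => (μ i : ℝ)), y))
      = fun y => ee n (fun i => m i - (k : ℤ) * μ i) y * σ (x, y) from funext key]

lemma continuous_ee (n : ℕ) (m : Fin n → ℤ) : Continuous (ee n m) := by
  unfold ee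
  fun_prop

lemma integrableOn_box {n : ℕ} {f : (Fin n → ℝ) → ℂ} (hf : Continuous f) :
    IntegrableOn f (unitBox n) := by
  rw [unitBox_eq]
  exact hf.continuousOn.integrableOn_compact isCompact_Icc

lemma hasFDerivAt_WB (n : ℕ) {σ : En n → ℂ} (hσ : ContDiff ℝ (⊤ : ℕ∞) σ) (m : Fin n → ℤ)
    (x₀ : Fin n → ℝ) :
    HasFDerivAt (WB n σ m)
      (∫ y in unitBox n, ee n m y • ((fderiv ℝ σ (x₀, y)).comp
        (ContinuousLinearMap.inl ℝ (Fin n → ℝ) (Fin n → ℝ)))) x₀ := by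
  set F' : (Fin n → ℝ) → (Fin n → ℝ) → (Fin n → ℝ) →L[ℝ] ℂ := fun x y =>
    ee n m y • ((fderiv ℝ σ (x, y)).comp
      (ContinuousLinearMap.inl ℝ (Fin n → ℝ) (Fin n → ℝ))) with hF'
  have hfc : Continuous (fderiv ℝ σ) := (hσ.fderiv_right (m := (⊤ : ℕ∞)) (by simp)).continuous
  have hK : IsCompact ((Metric.closedBall x₀ 1) ×ˢ (Set.Icc (0 : Fin n → ℝ) 1)) :=
    (isCompact_closedBall x₀ 1).prod isCompact_Icc
  obtain ⟨C, hC⟩ := hK.exists_bound_of_continuousOn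
    (f := fun p : En n => (fderiv ℝ σ p).comp
      (ContinuousLinearMap.inl ℝ (Fin n → ℝ) (Fin n → ℝ)))
    ((hfc.clm_comp continuous_const).continuousOn)
  have key := hasFDerivAt_integral_of_dominated_of_fderiv_le
    (μ := volume.restrict (unitBox n)) (x₀ := x₀)
    (F := fun x y => ee n m y * σ (x, y)) (F' := F')
    (bound := fun _ => C) (s := Metric.ball x₀ 1) (Metric.ball_mem_nhds x₀ one_pos) ?_ ?_ ?_ ?_ ?_ ?_
  · exact key
  · filter_upwards with x
    exact ((continuous_ee n m).mul (hσ.continuous.comp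
      (Continuous.prodMk_right x))).aestronglyMeasurable
  · exact integrableOn_box ((continuous_ee n m).mul
      (hσ.continuous.comp (continuous_const.prodMk continuous_id)))
  · exact ((continuous_ee n m).smul ((hfc.comp
      (continuous_const.prodMk continuous_id)).clm_comp
        continuous_const)).aestronglyMeasurable
  · rw [unitBox_eq]
    filter_upwards [ae_restrict_mem measurableSet_Icc] with y hy x hx
    rw [hF']
    refine (norm_smul_le (ee n m y) ((fderiv ℝ σ (x, y)).comp (ContinuousLinearMap.inl ℝ (Fin n → ℝ) (Fin n → ℝ)))).trans ?_
    rw [norm_ee, one_mul]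
    exact hC (x, y) ⟨Metric.ball_subset_closedBall hx, hy⟩
  · rw [unitBox_eq]
    exact integrableOn_const (isCompact_Icc.measure_lt_top).ne
  · filter_upwards with y x _
    have h1 : HasFDerivAt (fun x => σ (x, y))
        ((fderiv ℝ σ (x, y)).comp (ContinuousLinearMap.inl ℝ (Fin n → ℝ) (Fin n → ℝ))) x :=
      ((hσ.differentiable (by simp) (x, y)).hasFDerivAt).comp x (hasFDerivAt_prodMk_left x y)
    exact h1.const_mul (ee n m y)

lemma pd1_WB {n : ℕ} {σ : En n → ℂ} (hσ : ContDiff ℝ (⊤ : ℕ∞) σ) (m : Fin n → ℤ)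
    (i : Fin n) (x₀ : Fin n → ℝ) :
    pd1 n i (WB n σ m) x₀ = WB n (Dv n (Pi.single i 1, 0) σ) m x₀ := by
  have H := hasFDerivAt_WB n hσ m x₀
  have hfc : Continuous (fderiv ℝ σ) := (hσ.fderiv_right (m := (⊤ : ℕ∞)) (by simp)).continuous
  have hint : IntegrableOn (fun y => ee n m y • ((fderiv ℝ σ (x₀, y)).comp
      (ContinuousLinearMap.inl ℝ (Fin n → ℝ) (Fin n → ℝ)))) (unitBox n) := by
    rw [unitBox_eq]
    exact (((continuous_ee n m).smul ((hfc.comp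
      (continuous_const.prodMk continuous_id)).clm_comp
        continuous_const))).continuousOn.integrableOn_compact isCompact_Icc
  rw [pd1, H.fderiv, ContinuousLinearMap.integral_apply hint]
  rw [WB_eq]
  congr 1

lemma ibp (n : ℕ) {σ : En (n+1) → ℂ} (hσ : PerY (n+1) σ) (m : Fin (n+1) → ℤ)
    (j : Fin (n+1)) (x : Fin (n+1) → ℝ) :
    (2 * (Real.pi : ℂ) * Complex.I * (m j : ℂ)) * WB (n+1) σ m x
      + WB (n+1) (Dv (n+1) (0, Pi.single j 1) σ) m x = 0 := by
  obtain ⟨hsm, hper⟩ := hσ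
  have hfc : Continuous (fderiv ℝ σ) := (hsm.fderiv_right (m := (⊤ : ℕ∞)) (by simp)).continuous
  set c : ℂ := 2 * (Real.pi : ℂ) * Complex.I with hc
  set ℓ : (Fin (n+1) → ℝ) →L[ℝ] ℝ :=
    ∑ i, ((m i : ℝ) • ContinuousLinearMap.proj (R := ℝ) (φ := fun _ : Fin (n+1) => ℝ) i)
    with hℓ
  have hℓ_apply : ∀ y : Fin (n+1) → ℝ, ℓ y = ∑ i, (m i : ℝ) * y i := by
    intro y
    rw [hℓ]
    simp [ContinuousLinearMap.sum_apply]
  have hee : ∀ y : Fin (n+1) → ℝ, ee (n+1) m y = Complex.exp (c * ((ℓ y : ℝ) : ℂ)) := by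
    intro y; rw [ee, hℓ_apply]
  set ℓC : (Fin (n+1) → ℝ) →L[ℝ] ℂ := Complex.ofRealCLM.comp ℓ with hℓC
  -- the integrand and its derivative
  set g : (Fin (n+1) → ℝ) → ℂ := fun y => ee (n+1) m y * σ (x, y) with hg
  set g' : (Fin (n+1) → ℝ) → (Fin (n+1) → ℝ) →L[ℝ] ℂ := fun y =>
    ee (n+1) m y • ((fderiv ℝ σ (x, y)).comp
      (ContinuousLinearMap.inr ℝ (Fin (n+1) → ℝ) (Fin (n+1) → ℝ)))
      + σ (x, y) • (ee (n+1) m y • (c • ℓC)) with hg'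
  have hgd : ∀ y, HasFDerivAt g (g' y) y := by
    intro y
    have h1 : HasFDerivAt (fun y : Fin (n+1) → ℝ => c * ((ℓ y : ℝ) : ℂ)) (c • ℓC) y :=
      ((Complex.ofRealCLM.hasFDerivAt).comp y ℓ.hasFDerivAt).const_mul c
    have h2 := h1.cexp
    have h0 : (fun y : Fin (n+1) → ℝ => Complex.exp (c * ((ℓ y : ℝ) : ℂ))) = ee (n+1) m :=
      funext fun y => (hee y).symm
    rw [h0] at h2
    rw [← hee y] at h2
    have h3 : HasFDerivAt (fun y : Fin (n+1) → ℝ => σ (x, y))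
        ((fderiv ℝ σ (x, y)).comp
          (ContinuousLinearMap.inr ℝ (Fin (n+1) → ℝ) (Fin (n+1) → ℝ))) y :=
      ((hsm.differentiable (by simp) (x, y)).hasFDerivAt).comp y (hasFDerivAt_prodMk_right x y)
    exact h2.mul h3
  set f : (Fin (n+1) → ℝ) → (Fin (n+1) → ℂ) := fun y => Pi.single j (g y) with hf
  set f' : (Fin (n+1) → ℝ) → (Fin (n+1) → ℝ) →L[ℝ] (Fin (n+1) → ℂ) := fun y =>
    (ContinuousLinearMap.pi (Pi.single j (ContinuousLinearMap.id ℝ ℂ))).comp (g' y) with hf'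
  have hfd : ∀ y, HasFDerivAt f (f' y) y := fun y =>
    (hasFDerivAt_single (𝕜 := ℝ) (E := fun _ : Fin (n+1) => ℂ) (i := j) (g y)).comp y (hgd y)
  have hℓj : ℓ (Pi.single j 1) = (m j : ℝ) := by
    rw [hℓ_apply]
    simp [Pi.single_apply, mul_ite]
  -- the divergence integrand
  have hdiv : ∀ y, (∑ i, f' y (Pi.single i 1) i)
      = c * (m j : ℂ) * (ee (n+1) m y * σ (x, y))
        + ee (n+1) m y * Dv (n+1) (0, Pi.single j 1) σ (x, y) := by
    intro y
    have hs : ∀ i : Fin (n+1), f' y (Pi.single i 1) i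
        = Pi.single (M := fun _ : Fin (n+1) => ℂ) j (g' y (Pi.single i 1)) i := by
      intro i
      show (Pi.single (M := fun _ : Fin (n+1) => ℂ →L[ℝ] ℂ) j (ContinuousLinearMap.id ℝ ℂ) i)
        ((g' y) (Pi.single i 1)) = _
      by_cases hij : i = j
      · subst hij; simp
      · simp [Pi.single_eq_of_ne hij]
    rw [Finset.sum_congr rfl fun i _ => hs i]
    rw [Finset.sum_eq_single j (fun i _ hij => Pi.single_eq_of_ne hij _)
      (fun h => absurd (Finset.mem_univ j) h)]
    rw [Pi.single_eq_same]
    have : g' y (Pi.single j 1)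
        = ee (n+1) m y * (fderiv ℝ σ (x, y) (0, Pi.single j 1))
          + σ (x, y) * (ee (n+1) m y * (c * ((ℓ (Pi.single j 1) : ℝ) : ℂ))) := by
      rw [hg']
      simp only [ContinuousLinearMap.add_apply, ContinuousLinearMap.smul_apply,
        ContinuousLinearMap.comp_apply, ContinuousLinearMap.inr_apply, hℓC,
        Complex.ofRealCLM_apply, smul_eq_mul]
    rw [this, hℓj]
    rw [show Dv (n+1) (0, Pi.single j 1) σ (x, y) = fderiv ℝ σ (x, y) (0, Pi.single j 1) from rfl]
    push_cast
    ring
  -- continuity facts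
  have hgc : Continuous g := by
    rw [hg]
    exact (continuous_ee _ m).mul (hsm.continuous.comp (continuous_const.prodMk continuous_id))
  have hfcn : Continuous f := by
    rw [hf]
    refine continuous_pi fun i => ?_
    by_cases hij : i = j
    · subst hij
      simpa only [Pi.single_eq_same] using hgc
    · simp only [Pi.single_eq_of_ne hij]
      exact continuous_const
  have hDvc : Continuous (fun y => Dv (n+1) (0, Pi.single j 1) σ (x, y)) := by
    have : Continuous (Dv (n+1) (0, Pi.single j 1) σ) :=
      (contDiff_Dv _ _ hsm).continuous
    exact this.comp (continuous_const.prodMk continuous_id)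
  have hG2c : Continuous (fun y => ee (n+1) m y * Dv (n+1) (0, Pi.single j 1) σ (x, y)) :=
    (continuous_ee _ m).mul hDvc
  have hG1c : Continuous (fun y => c * (m j : ℂ) * (ee (n+1) m y * σ (x, y))) :=
    continuous_const.mul hgc
  -- divergence theorem
  have hle : (0 : Fin (n+1) → ℝ) ≤ 1 := fun i => zero_le_one
  have Hi : IntegrableOn (fun y => ∑ i, f' y (Pi.single i 1) i)
      (Set.Icc (0 : Fin (n+1) → ℝ) 1) := by
    rw [show (fun y => ∑ i, f' y (Pi.single i 1) i)
        = fun y => c * (m j : ℂ) * (ee (n+1) m y * σ (x, y))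
            + ee (n+1) m y * Dv (n+1) (0, Pi.single j 1) σ (x, y) from funext hdiv]
    exact ((hG1c.add hG2c).continuousOn).integrableOn_compact isCompact_Icc
  have HDT := integral_divergence_of_hasFDerivAt_off_countable
    (0 : Fin (n+1) → ℝ) (1 : Fin (n+1) → ℝ) hle f f' ∅
    Set.countable_empty hfcn.continuousOn (fun y _ => hfd y) Hi
  -- periodicity kills the boundary terms
  have hσper : ∀ y : Fin (n+1) → ℝ, σ (x, y + Pi.single j 1) = σ (x, y) := by
    intro y
    have h := hper (Pi.single j 1) x y
    rw [show (fun i => ((Pi.single j 1 : Fin (n+1) → ℤ) i : ℝ)) = Pi.single j 1 by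
      funext p; simp [Pi.single_apply, apply_ite]] at h
    exact h
  have heeper : ∀ y : Fin (n+1) → ℝ, ee (n+1) m (y + Pi.single j 1) = ee (n+1) m y := by
    intro y
    rw [ee, ee]
    have hsum : (∑ i, (m i : ℝ) * (y + Pi.single j (1:ℝ) : Fin (n+1) → ℝ) i)
        = (∑ i, (m i : ℝ) * y i) + (m j : ℝ) := by
      simp [mul_add, Finset.sum_add_distrib, Pi.single_apply, mul_ite]
    rw [hsum]
    push_cast
    rw [mul_add, Complex.exp_add,
      show (2 * (Real.pi : ℂ) * Complex.I) * (m j : ℂ)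
        = (m j : ℂ) * (2 * (Real.pi : ℂ) * Complex.I) by ring,
      Complex.exp_int_mul_two_pi_mul_I, mul_one]
  have hgper : ∀ y : Fin (n+1) → ℝ, g (y + Pi.single j 1) = g y := by
    intro y
    rw [hg]
    simp only [heeper y, hσper y]
  have hins : ∀ z : Fin n → ℝ, Fin.insertNth (α := fun _ : Fin (n+1) => ℝ) j (1 : ℝ) z
      = Fin.insertNth (α := fun _ : Fin (n+1) => ℝ) j (0 : ℝ) z + Pi.single j 1 := by
    intro z
    funext p
    refine Fin.succAboveCases j ?_ ?_ p
    · simp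
    · intro q
      simp [Fin.insertNth_apply_succAbove, Pi.single_eq_of_ne (Fin.succAbove_ne j q)]
  have Hzero : (∫ y in Set.Icc (0 : Fin (n+1) → ℝ) 1, ∑ i, f' y (Pi.single i 1) i) = 0 := by
    rw [HDT]
    refine Finset.sum_eq_zero fun i _ => ?_
    by_cases hij : i = j
    · subst hij
      rw [sub_eq_zero]
      refine integral_congr_ae (Filter.Eventually.of_forall fun z => ?_)
      show f (i.insertNth ((1 : Fin (n+1) → ℝ) i) z) i = f (i.insertNth ((0 : Fin (n+1) → ℝ) i) z) i
      rw [hf]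
      simp only [Pi.single_eq_same, Pi.one_apply, Pi.zero_apply]
      rw [hins z, hgper]
    · have hz : ∀ z : Fin n → ℝ, ∀ t : ℝ, f (i.insertNth t z) i = 0 := by
        intro z t
        rw [hf]
        exact Pi.single_eq_of_ne hij _
      rw [show (fun z => f (i.insertNth ((1 : Fin (n+1) → ℝ) i) z) i) = fun _ => (0 : ℂ) from
          funext fun z => hz z _]
      rw [show (fun z => f (i.insertNth ((0 : Fin (n+1) → ℝ) i) z) i) = fun _ => (0 : ℂ) from
          funext fun z => hz z _]
      simp
  -- put everything together
  rw [show (fun y => ∑ i, f' y (Pi.single i 1) i)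
      = fun y => c * (m j : ℂ) * (ee (n+1) m y * σ (x, y))
          + ee (n+1) m y * Dv (n+1) (0, Pi.single j 1) σ (x, y) from funext hdiv] at Hzero
  rw [integral_add (hG1c.continuousOn.integrableOn_compact isCompact_Icc)
    (hG2c.continuousOn.integrableOn_compact isCompact_Icc)] at Hzero
  rw [integral_const_mul] at Hzero
  rw [WB_eq, WB_eq, unitBox_eq]
  exact Hzero

lemma WB_bound {n : ℕ} {σ : En n → ℂ} (hcont : Continuous σ) {C : ℝ}
    (hC : ∀ p ∈ (Set.Icc (0 : Fin n → ℝ) 1) ×ˢ (Set.Icc (0 : Fin n → ℝ) 1), ‖σ p‖ ≤ C)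
    (m : Fin n → ℤ) {x : Fin n → ℝ} (hx : x ∈ Set.Icc (0 : Fin n → ℝ) 1) :
    ‖WB n σ m x‖ ≤ C := by
  rw [WB_eq, unitBox_eq]
  have h1 : volume (Set.Icc (0 : Fin n → ℝ) 1) = 1 := by
    rw [Real.volume_Icc_pi]
    simp
  have h2 := norm_setIntegral_le_of_norm_le_const (μ := volume)
    (s := Set.Icc (0 : Fin n → ℝ) 1)
    (f := fun y => ee n m y * σ (x, y)) (C := C)
    (by rw [h1]; exact ENNReal.one_lt_top)
    (fun y hy => by rw [norm_mul, norm_ee, one_mul]; exact hC (x, y) ⟨hx, hy⟩)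
  simpa [h1, Measure.real] using h2

lemma perY_iterate {n : ℕ} (j : Fin n) {σ : En n → ℂ} (hσ : PerY n σ) (N : ℕ) :
    PerY n ((Dv n (0, Pi.single j 1))^[N] σ) := by
  induction N with
  | zero => simpa using hσ
  | succ N ih =>
    rw [Function.iterate_succ_apply']
    exact Dy_perY n j ih

lemma norm_two_pi_I_int (a : ℤ) :
    ‖(2 * (Real.pi : ℂ) * Complex.I * (a : ℂ))‖ = 2 * Real.pi * |(a : ℝ)| := by
  simp only [norm_mul, Complex.norm_I, Complex.norm_two, Complex.norm_real, Real.norm_eq_abs,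
    Complex.norm_intCast]
  rw [abs_of_pos Real.pi_pos]
  ring

lemma WB_ibp_iter {n : ℕ} (N : ℕ) {σ : En (n+1) → ℂ} (hσ : PerY (n+1) σ)
    {m : Fin (n+1) → ℤ} {j : Fin (n+1)} (hmj : m j ≠ 0) (x : Fin (n+1) → ℝ) :
    ‖WB (n+1) σ m x‖ ≤ ((2 * Real.pi * |(m j : ℝ)|)⁻¹) ^ N
      * ‖WB (n+1) ((Dv (n+1) (0, Pi.single j 1))^[N] σ) m x‖ := by
  induction N generalizing σ with
  | zero => simp
  | succ N ih =>
    have ha : (2 * (Real.pi : ℂ) * Complex.I * (m j : ℂ)) ≠ 0 := by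
      refine mul_ne_zero (mul_ne_zero (mul_ne_zero two_ne_zero ?_) Complex.I_ne_zero) ?_
      · exact Complex.ofReal_ne_zero.2 Real.pi_ne_zero
      · exact_mod_cast hmj
    have h := ibp n hσ m j x
    have hW : WB (n+1) σ m x
        = (2 * (Real.pi : ℂ) * Complex.I * (m j : ℂ))⁻¹
          * (-(WB (n+1) (Dv (n+1) (0, Pi.single j 1) σ) m x)) := by
      rw [eq_inv_mul_iff_mul_eq₀ ha]
      linear_combination h
    have hnorm : ‖WB (n+1) σ m x‖ = (2 * Real.pi * |(m j : ℝ)|)⁻¹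
        * ‖WB (n+1) (Dv (n+1) (0, Pi.single j 1) σ) m x‖ := by
      rw [hW, norm_mul, norm_inv, norm_neg, norm_two_pi_I_int]
    have hstep := ih (Dy_perY (n+1) j hσ)
    rw [← Function.iterate_succ_apply] at hstep
    have hpos : (0:ℝ) ≤ (2 * Real.pi * |(m j : ℝ)|)⁻¹ := by positivity
    calc ‖WB (n+1) σ m x‖
        = (2 * Real.pi * |(m j : ℝ)|)⁻¹
          * ‖WB (n+1) (Dv (n+1) (0, Pi.single j 1) σ) m x‖ := hnorm
      _ ≤ (2 * Real.pi * |(m j : ℝ)|)⁻¹ * (((2 * Real.pi * |(m j : ℝ)|)⁻¹) ^ N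
          * ‖WB (n+1) ((Dv (n+1) (0, Pi.single j 1))^[N+1] σ) m x‖) :=
          mul_le_mul_of_nonneg_left hstep hpos
      _ = ((2 * Real.pi * |(m j : ℝ)|)⁻¹) ^ (N+1)
          * ‖WB (n+1) ((Dv (n+1) (0, Pi.single j 1))^[N+1] σ) m x‖ := by
          rw [pow_succ']; ring

lemma exists_coord_norm {n : ℕ} (v : Fin (n+1) → ℝ) : ∃ j, ‖v‖ = |v j| := by
  obtain ⟨j, _, hj⟩ := Finset.exists_mem_eq_sup Finset.univ
    ⟨(0 : Fin (n+1)), Finset.mem_univ 0⟩ (fun i => ‖v i‖₊)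
  refine ⟨j, ?_⟩
  rw [Pi.norm_def, hj]
  simp [Real.norm_eq_abs]

lemma WB_decay {n : ℕ} {σ : En (n+1) → ℂ} (hσ : PerY (n+1) σ) (N : ℕ) :
    ∃ C : ℝ, 0 ≤ C ∧ ∀ (m : Fin (n+1) → ℤ) (x : Fin (n+1) → ℝ),
      x ∈ Set.Icc (0 : Fin (n+1) → ℝ) 1 →
      (1 + ‖(fun i => (m i : ℝ) : Fin (n+1) → ℝ)‖) ^ N * ‖WB (n+1) σ m x‖ ≤ C := by
  have hK : IsCompact ((Set.Icc (0 : Fin (n+1) → ℝ) 1) ×ˢ (Set.Icc (0 : Fin (n+1) → ℝ) 1)) :=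
    isCompact_Icc.prod isCompact_Icc
  have hmain : ∀ j : Fin (n+1), ∃ Cj : ℝ,
      ∀ p ∈ (Set.Icc (0 : Fin (n+1) → ℝ) 1) ×ˢ (Set.Icc (0 : Fin (n+1) → ℝ) 1),
        ‖((Dv (n+1) (0, Pi.single j 1))^[N] σ) p‖ ≤ Cj := fun j =>
    hK.exists_bound_of_continuousOn ((perY_iterate j hσ N).1.continuous.continuousOn)
  choose Cs hCs using hmain
  obtain ⟨C0, hC0⟩ := hK.exists_bound_of_continuousOn (hσ.1.continuous.continuousOn)
  set C1 : ℝ := ∑ j, |Cs j| with hC1def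
  have hC1nonneg : 0 ≤ C1 := Finset.sum_nonneg fun j _ => abs_nonneg _
  have hCsle : ∀ j, Cs j ≤ C1 := by
    intro j
    refine (le_abs_self _).trans ?_
    rw [hC1def]
    exact Finset.single_le_sum (f := fun j => |Cs j|) (fun i _ => abs_nonneg _)
      (Finset.mem_univ j)
  refine ⟨max C1 C0, le_trans hC1nonneg (le_max_left _ _), ?_⟩
  intro m x hx
  by_cases hm : m = 0
  · subst hm
    have hz : ((fun i => (((0 : Fin (n+1) → ℤ)) i : ℝ)) : Fin (n+1) → ℝ) = 0 := by
      funext i; simp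
    rw [hz, norm_zero, add_zero, one_pow, one_mul]
    exact le_trans (WB_bound hσ.1.continuous hC0 0 hx) (le_max_right _ _)
  · obtain ⟨j, hj⟩ := exists_coord_norm (fun i => (m i : ℝ))
    have hmj : m j ≠ 0 := by
      intro h0
      apply hm
      have hnz : ‖(fun i => (m i : ℝ) : Fin (n+1) → ℝ)‖ = 0 := by rw [hj, h0]; simp
      funext i
      have hi := norm_le_pi_norm (f := fun i : Fin (n+1) => (m i : ℝ)) i
      rw [hnz, Real.norm_eq_abs] at hi
      have : (m i : ℝ) = 0 := abs_nonpos_iff.1 hi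
      exact_mod_cast this
    have h1le : (1:ℝ) ≤ |(m j : ℝ)| := by
      have := Int.one_le_abs hmj
      calc (1:ℝ) ≤ ((|m j| : ℤ) : ℝ) := by exact_mod_cast this
        _ = |(m j : ℝ)| := by push_cast; ring
    have habs0 : |(m j : ℝ)| ≠ 0 := by linarith
    have hiter := WB_ibp_iter N hσ hmj x
    have hbd : ‖WB (n+1) ((Dv (n+1) (0, Pi.single j 1))^[N] σ) m x‖ ≤ C1 :=
      (WB_bound (perY_iterate j hσ N).1.continuous (hCs j) m hx).trans (hCsle j)
    have hWB : ‖WB (n+1) σ m x‖ ≤ ((2 * Real.pi * |(m j : ℝ)|)⁻¹) ^ N * C1 :=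
      hiter.trans (mul_le_mul_of_nonneg_left hbd (by positivity))
    calc (1 + ‖(fun i => (m i : ℝ) : Fin (n+1) → ℝ)‖) ^ N * ‖WB (n+1) σ m x‖
        ≤ (2 * |(m j : ℝ)|) ^ N * (((2 * Real.pi * |(m j : ℝ)|)⁻¹) ^ N * C1) := by
          refine mul_le_mul (pow_le_pow_left₀ (by positivity) (by rw [hj]; linarith) N)
            hWB (norm_nonneg _) (by positivity)
      _ = (Real.pi⁻¹) ^ N * C1 := by
          rw [← mul_assoc, ← mul_pow]
          rw [show (2 * |(m j : ℝ)|) * (2 * Real.pi * |(m j : ℝ)|)⁻¹ = Real.pi⁻¹ by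
            field_simp]
      _ ≤ 1 ^ N * C1 :=
          mul_le_mul_of_nonneg_right (pow_le_pow_left₀ (by positivity)
            (inv_le_one_of_one_le₀ (by linarith [Real.pi_gt_three])) N) hC1nonneg
      _ ≤ max C1 C0 := by rw [one_pow, one_mul]; exact le_max_left _ _

lemma foldr_pres {β : Type} (P : β → Prop) :
    ∀ (L : List (β → β)), (∀ F ∈ L, ∀ g, P g → P (F g)) →
      ∀ g, P g → P (L.foldr (fun F ψ => F ψ) g)
  | [], _, g, hg => hg
  | F :: L, h, g, hg => by
    simp only [List.foldr_cons]
    exact h F List.mem_cons_self _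
      (foldr_pres P L (fun F' hF' => h F' (List.mem_cons_of_mem _ hF')) g hg)

lemma pdMulti_WB {n k : ℕ} {τ : En n → ℂ} (hτ : IsTestSection n k τ) (m : Fin n → ℤ)
    (α : Fin n → ℕ) :
    ∃ σ, IsTestSection n k σ ∧ pdMulti n α (WB n τ m) = WB n σ m := by
  have hstep : ∀ (i : Fin n) (g : (Fin n → ℝ) → ℂ),
      (∃ σ, IsTestSection n k σ ∧ g = WB n σ m) →
      ∃ σ, IsTestSection n k σ ∧ pd1 n i g = WB n σ m := by
    rintro i g ⟨σ, hσ, rfl⟩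
    exact ⟨Dv n (Pi.single i 1, 0) σ, Dx_isTestSection n k i hσ,
      funext fun x => pd1_WB hσ.1 m i x⟩
  have hiter : ∀ (i : Fin n) (N : ℕ) (g : (Fin n → ℝ) → ℂ),
      (∃ σ, IsTestSection n k σ ∧ g = WB n σ m) →
      ∃ σ, IsTestSection n k σ ∧ (pd1 n i)^[N] g = WB n σ m := by
    intro i N
    induction N with
    | zero => intro g hg; simpa using hg
    | succ N ih =>
      intro g hg
      rw [Function.iterate_succ_apply']
      exact hstep i _ (ih g hg)
  have hmain := foldr_pres (fun g => ∃ σ, IsTestSection n k σ ∧ g = WB n σ m)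
    (List.ofFn fun i => (pd1 n i)^[α i]) ?_ (WB n τ m) ⟨τ, hτ, rfl⟩
  · exact hmain
  · intro F hF g hg
    rw [List.mem_ofFn] at hF
    obtain ⟨i, rfl⟩ := hF
    exact hiter i (α i) g hg

/-- each Weil–Brezin coefficient of a level-`k` test section is a Schwartz
function: all of its derivatives decay faster than any inverse power of `‖x‖`. -/
theorem stmt6 (n k : ℕ) (hn : 0 < n) (hk : 1 ≤ k) (τ : En n → ℂ)
    (hτ : IsTestSection n k τ) (m : Fin n → ℤ) (α : Fin n → ℕ) (s : ℕ) :
    ∃ C : ℝ, ∀ x : Fin n → ℝ,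
      (1 + ‖x‖) ^ s * ‖pdMulti n α (WB n τ m) x‖ ≤ C := by
  obtain ⟨n', rfl⟩ : ∃ n', n = n' + 1 := ⟨n - 1, (Nat.succ_pred_eq_of_pos hn).symm⟩
  obtain ⟨σ, hσ, hEq⟩ := pdMulti_WB hτ m α
  obtain ⟨C1, hC10, hC1⟩ := WB_decay hσ.perY s
  set a : ℝ := ‖(fun i => (m i : ℝ) : Fin (n'+1) → ℝ)‖ with ha
  have ha0 : 0 ≤ a := norm_nonneg _
  refine ⟨(2 + a) ^ s * C1, ?_⟩
  intro x
  rw [hEq]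
  set μ : Fin (n'+1) → ℤ := fun i => ⌊x i⌋ with hμ
  set x₀ : Fin (n'+1) → ℝ := fun i => Int.fract (x i) with hx₀
  have hxsplit : x = x₀ + (fun i => (μ i : ℝ)) := by
    funext i
    simp only [hx₀, hμ, Pi.add_apply]
    exact (Int.fract_add_floor (x i)).symm
  have hx0mem : x₀ ∈ Set.Icc (0 : Fin (n'+1) → ℝ) 1 := by
    rw [Set.mem_Icc]
    exact ⟨fun i => Int.fract_nonneg _, fun i => (Int.fract_lt_one _).le⟩
  set m' : Fin (n'+1) → ℤ := fun i => m i - (k : ℤ) * μ i with hm'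
  have hW : WB (n'+1) σ m x = WB (n'+1) σ m' x₀ := by
    rw [hxsplit, WB_translate hσ]
  set b : ℝ := ‖(fun i => (m' i : ℝ) : Fin (n'+1) → ℝ)‖ with hb
  have hb0 : 0 ≤ b := norm_nonneg _
  have hxle : ‖x‖ ≤ 1 + (a + b) := by
    rw [hxsplit]
    refine (norm_add_le _ _).trans (add_le_add ?_ ?_)
    · refine (pi_norm_le_iff_of_nonneg zero_le_one).2 fun i => ?_
      simp only [hx₀]
      rw [Real.norm_eq_abs, abs_of_nonneg (Int.fract_nonneg _)]
      exact (Int.fract_lt_one _).le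
    · refine (pi_norm_le_iff_of_nonneg (by positivity)).2 fun i => ?_
      have h1 : ((k : ℝ)) * (μ i : ℝ) = (m i : ℝ) - (m' i : ℝ) := by
        simp only [hm']
        push_cast
        ring
      have hk1 : (1 : ℝ) ≤ (k : ℝ) := by exact_mod_cast hk
      have h2 : |(μ i : ℝ)| ≤ |(k : ℝ) * (μ i : ℝ)| := by
        rw [abs_mul]
        nlinarith [abs_nonneg ((μ i : ℝ)), abs_of_nonneg (le_trans zero_le_one hk1)]
      have h3 : |(m i : ℝ)| ≤ a := by
        have := norm_le_pi_norm (f := fun i : Fin (n'+1) => (m i : ℝ)) i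
        rwa [Real.norm_eq_abs] at this
      have h4 : |(m' i : ℝ)| ≤ b := by
        have := norm_le_pi_norm (f := fun i : Fin (n'+1) => (m' i : ℝ)) i
        rwa [Real.norm_eq_abs] at this
      rw [Real.norm_eq_abs]
      calc |(μ i : ℝ)| ≤ |(m i : ℝ) - (m' i : ℝ)| := by rw [← h1]; exact h2
        _ ≤ |(m i : ℝ)| + |(m' i : ℝ)| := abs_sub _ _
        _ ≤ a + b := add_le_add h3 h4
  have hkey : (1 + ‖x‖) ≤ (2 + a) * (1 + b) := by nlinarith
  have hfin := hC1 m' x₀ hx0mem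
  calc (1 + ‖x‖) ^ s * ‖WB (n'+1) σ m x‖
      = (1 + ‖x‖) ^ s * ‖WB (n'+1) σ m' x₀‖ := by rw [hW]
    _ ≤ ((2 + a) * (1 + b)) ^ s * ‖WB (n'+1) σ m' x₀‖ :=
        mul_le_mul_of_nonneg_right (pow_le_pow_left₀ (by positivity) hkey s) (norm_nonneg _)
    _ = (2 + a) ^ s * ((1 + b) ^ s * ‖WB (n'+1) σ m' x₀‖) := by
        rw [mul_pow]; ring
    _ ≤ (2 + a) ^ s * C1 := mul_le_mul_of_nonneg_left hfin (by positivity)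


end
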